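/- arXiv:2504.16254 — 3 statements merged into one kernel-verified Lean document; each statement's English description precedes it below -/
import Mathlib

section
/- Let φ(t) = (1+t)ln(1+t) − t for t ≥ 0, and for x, y, z > 0 define f(x,y,z) = (xy/2) φ(z/x) − (ln(y/x) + 1). Then for all x, y, z with 0 < x ≤ y/3, z ≥ 1.999 and y ≥ 3.95, one has f(x,y,z) > 0.001. -/
/-!
Since `φ` is increasing, it suffices to take `z = c := 1.999`. Then
`f = g_y(x) - log y - 1` with `g_y(x) = (y/2) · x φ(c/x) + log x`, and the bound
`log v ≤ (v - v⁻¹)/2` makes `g_y` decreasing on `(0, c²y/4 - c]`, which contains `(0, y/3]`.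
At `x = y/3` this leaves `(y²/6) φ(3c/y) - log 3 - 1`, increasing in `y` because
`log (1 + s) ≥ 2s/(2 + s)`. Its value at `y = 3.95` exceeds `0.001` by only about `2·10⁻⁴`;
six terms of the series of `log (1 + a)` in powers of `a/(a + 2)` certify this.
-/

open Real Set

noncomputable def chernoffPhi (t : ℝ) : ℝ := (1 + t) * log (1 + t) - t

lemma hasDerivAt_chernoffPhi {t : ℝ} (ht : -1 < t) :
    HasDerivAt chernoffPhi (log (1 + t)) t := by
  have h1t : 1 + t ≠ 0 := by linarith
  have h : HasDerivAt (fun s => (1 + s) * log (1 + s) - s)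
      (1 * log (1 + t) + (1 + t) * (1 / (1 + t)) - 1) t :=
    ((((hasDerivAt_id' t).const_add 1).mul
      (((hasDerivAt_id' t).const_add 1).log h1t)).sub (hasDerivAt_id' t))
  exact h.congr_deriv (by field_simp; ring)

lemma chernoffPhi_monotoneOn : MonotoneOn chernoffPhi (Ici 0) := by
  refine monotoneOn_of_hasDerivWithinAt_nonneg (convex_Ici 0)
    (fun t ht =>
      (hasDerivAt_chernoffPhi (by linarith [mem_Ici.1 ht])).continuousAt.continuousWithinAt)
    (fun t ht => (hasDerivAt_chernoffPhi ?_).hasDerivWithinAt) (fun t ht => log_nonneg ?_)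
  all_goals rw [interior_Ici] at ht; linarith [mem_Ioi.1 ht]

lemma log_le_half_sub_inv {v : ℝ} (hv : 1 ≤ v) : log v ≤ (v - v⁻¹) / 2 :=
  sinh_log (by linarith) ▸ self_le_sinh_iff.2 (log_nonneg hv)

lemma hasDerivAt_chernoffPhi_const_div {c x : ℝ} (hc : 0 ≤ c) (hx : 0 < x) :
    HasDerivAt (fun x => chernoffPhi (c / x)) (log (1 + c / x) * (-c / x ^ 2)) x := by
  have hdiv : HasDerivAt (fun x => c / x) (-c / x ^ 2) x := by
    simpa [div_eq_mul_inv, neg_div] using (hasDerivAt_inv hx.ne').const_mul c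
  exact (hasDerivAt_chernoffPhi (by linarith [div_nonneg hc hx.le])).comp x hdiv

lemma antitoneOn_mul_chernoffPhi_div_add_log {c y : ℝ} (hc : 0 < c) :
    AntitoneOn (fun x => y / 2 * (x * chernoffPhi (c / x)) + log x)
      (Ioc 0 (c ^ 2 * y / 4 - c)) := by
  have hderiv (x : ℝ) (hx : 0 < x) :
      HasDerivAt (fun x => y / 2 * (x * chernoffPhi (c / x)) + log x)
      (y / 2 * (chernoffPhi (c / x) + x * (log (1 + c / x) * (-c / x ^ 2))) + x⁻¹) x :=
    ((((hasDerivAt_id' x).fun_mul (hasDerivAt_chernoffPhi_const_div hc.le hx)).const_mul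
      (y / 2)).add (hasDerivAt_log hx.ne')).congr_deriv (by simp)
  refine antitoneOn_of_hasDerivWithinAt_nonpos (convex_Ioc _ _)
    (fun x hx => (hderiv x hx.1).continuousAt.continuousWithinAt)
    (fun x hx => (hderiv x (interior_subset hx).1).hasDerivWithinAt) fun x hx => ?_
  rw [interior_Ioc] at hx
  obtain ⟨hx, hxc⟩ := hx
  have hy : 0 < y := by nlinarith
  have hlog := log_le_half_sub_inv (le_add_of_nonneg_right (div_nonneg hc.le hx.le))
  calc y / 2 * (chernoffPhi (c / x) + x * (log (1 + c / x) * (-c / x ^ 2))) + x⁻¹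
      = y / 2 * (log (1 + c / x) - c / x) + x⁻¹ := by
        unfold chernoffPhi; field_simp; ring
    _ ≤ y / 2 * (((1 + c / x) - (1 + c / x)⁻¹) / 2 - c / x) + x⁻¹ := by gcongr
    _ = (4 * (x + c) - c ^ 2 * y) / (4 * x * (x + c)) := by field_simp; ring
    _ ≤ 0 := div_nonpos_of_nonpos_of_nonneg (by linarith) (by positivity)

lemma monotoneOn_sq_mul_chernoffPhi_div {a : ℝ} (ha : 0 ≤ a) :
    MonotoneOn (fun y => y ^ 2 * chernoffPhi (a / y)) (Ioi 0) := by
  have hderiv (y : ℝ) (hy : 0 < y) : HasDerivAt (fun y => y ^ 2 * chernoffPhi (a / y))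
      (2 * y * chernoffPhi (a / y) + y ^ 2 * (log (1 + a / y) * (-a / y ^ 2))) y :=
    ((hasDerivAt_pow 2 y).fun_mul (hasDerivAt_chernoffPhi_const_div ha hy)).congr_deriv
      (by simp)
  refine monotoneOn_of_hasDerivWithinAt_nonneg (convex_Ioi _)
    (fun y hy => (hderiv y hy).continuousAt.continuousWithinAt)
    (fun y hy => (hderiv y (interior_subset hy)).hasDerivWithinAt) fun y hy => ?_
  rw [interior_Ioi, mem_Ioi] at hy
  have hs : 0 ≤ a / y := div_nonneg ha hy.le
  have hlog := (div_le_iff₀ (by positivity)).1 (le_log_one_add_of_nonneg hs)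
  calc 0 ≤ y * ((a / y + 2) * log (1 + a / y) - 2 * (a / y)) :=
        mul_nonneg hy.le (by linarith)
    _ = 2 * y * chernoffPhi (a / y) + y ^ 2 * (log (1 + a / y) * (-a / y ^ 2)) := by
        unfold chernoffPhi; field_simp; ring

lemma sum_range_le_log_one_add {a : ℝ} (ha : 0 ≤ a) (n : ℕ) :
    ∑ k ∈ Finset.range n, 2 * (1 / (2 * k + 1)) * (a / (a + 2)) ^ (2 * k + 1) ≤ log (1 + a) :=
  sum_le_hasSum _ (fun _ _ => by positivity) (hasSum_log_one_add ha)

lemma log_three_add_lt_sq_mul_chernoffPhi :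
    log 3 + 1.001 < 3.95 ^ 2 * chernoffPhi (1.999 * 3 / 3.95) / 6 := by
  have h := sum_range_le_log_one_add (a := 1.999 * 3 / 3.95) (by norm_num) 6
  norm_num [Finset.sum_range_succ] at h
  unfold chernoffPhi
  norm_num
  linarith [log_three_lt_d9]

/-- **Lemma (lower bound on `f`).**
With `φ(t) = (1+t)ln(1+t) − t` and `f(x,y,z) = (xy/2) φ(z/x) − (ln(y/x) + 1)`,
for `0 < x ≤ y/3`, `z ≥ 1.999` and `y ≥ 3.95` we have `f(x,y,z) > 0.001`. -/
theorem f_gt (x y z : ℝ) (hx : 0 < x) (hxy : x ≤ y / 3) (hz : 1.999 ≤ z) (hy : 3.95 ≤ y) :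
    0.001 <
      x * y / 2 * ((1 + z / x) * Real.log (1 + z / x) - z / x) - (Real.log (y / x) + 1) := by
  have hy0 : 0 < y := by linarith
  have hphi : chernoffPhi (1.999 / x) ≤ chernoffPhi (z / x) :=
    chernoffPhi_monotoneOn (div_nonneg (by norm_num) hx.le) (div_nonneg (by linarith) hx.le)
      (by gcongr)
  have hx_le : y / 2 * (y / 3 * chernoffPhi (1.999 / (y / 3))) + log (y / 3) ≤
      y / 2 * (x * chernoffPhi (1.999 / x)) + log x :=
    antitoneOn_mul_chernoffPhi_div_add_log (by norm_num) ⟨hx, by linarith⟩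
      ⟨by positivity, by linarith⟩ hxy
  have hy_ge : 3.95 ^ 2 * chernoffPhi (1.999 * 3 / 3.95) ≤ y ^ 2 * chernoffPhi (1.999 * 3 / y) :=
    monotoneOn_sq_mul_chernoffPhi_div (by norm_num) (by norm_num : (0 : ℝ) < 3.95) hy0 hy
  change 0.001 < x * y / 2 * chernoffPhi (z / x) - (log (y / x) + 1)
  calc (0.001 : ℝ)
      < 3.95 ^ 2 * chernoffPhi (1.999 * 3 / 3.95) / 6 - log 3 - 1 := by
        linarith [log_three_add_lt_sq_mul_chernoffPhi]
    _ ≤ y ^ 2 * chernoffPhi (1.999 * 3 / y) / 6 - log 3 - 1 := by linarith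
    _ = y / 2 * (y / 3 * chernoffPhi (1.999 / (y / 3))) + log (y / 3) - log y - 1 := by
        rw [div_div_eq_mul_div, log_div hy0.ne' three_ne_zero]; ring
    _ ≤ y / 2 * (x * chernoffPhi (1.999 / x)) + log x - log y - 1 := by linarith
    _ = x * y / 2 * chernoffPhi (1.999 / x) - (log (y / x) + 1) := by
        rw [log_div hy0.ne' hx.ne']; ring
    _ ≤ x * y / 2 * chernoffPhi (z / x) - (log (y / x) + 1) := by gcongr
end

section
/- For every fixed z > 0, the function h₁(x) = x ( ln(1 + z/x) − z/x ) is strictly increasing in x on (0,∞). -/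
/-! Substituting `t = z / x` gives `h₁(x) = z (log (1 + t) / t - 1)`. Here `log (1 + t) / t` is the
slope of the secant of the strictly concave `log` between `1` and `1 + t`, so it strictly decreases
in `t`, while `t = z / x` strictly decreases in `x`. -/

open Real Set

theorem strictAntiOn_log_one_add_div_self :
    StrictAntiOn (fun t : ℝ => log (1 + t) / t) (Ioi 0) := by
  rintro s (hs : 0 < s) t (ht : 0 < t) hst
  have slope := strictConcaveOn_log_Ioi.secant_strict_mono (a := 1) (x := 1 + s) (y := 1 + t)
    (mem_Ioi.2 one_pos) (mem_Ioi.2 (by linarith)) (mem_Ioi.2 (by linarith))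
    (by linarith) (by linarith) (by linarith)
  simpa only [log_one, sub_zero, add_sub_cancel_left] using slope

theorem mul_log_one_add_div_sub_div_eq {x : ℝ} (hx : x ≠ 0) {z : ℝ} (hz : z ≠ 0) :
    x * (log (1 + z / x) - z / x) = z * (log (1 + z / x) / (z / x) - 1) := by
  field_simp

/-- **Fact.** For every fixed `z > 0`, `h₁(x) = x (ln(1 + z/x) − z/x)` is strictly
increasing on `(0,∞)`. -/
theorem h1_strictMono (z : ℝ) (hz : 0 < z) :
    StrictMonoOn (fun x : ℝ => x * (Real.log (1 + z / x) - z / x)) (Set.Ioi 0) := by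
  rintro a (ha : 0 < a) b (hb : 0 < b) hab
  have hzb_lt_hza : z / b < z / a := div_lt_div_of_pos_left hz ha hab
  have slope_lt := strictAntiOn_log_one_add_div_self (div_pos hz hb) (div_pos hz ha) hzb_lt_hza
  simp only [mul_log_one_add_div_sub_div_eq ha.ne' hz.ne',
    mul_log_one_add_div_sub_div_eq hb.ne' hz.ne']
  gcongr
end

section
/- For every fixed z > 0, the function h₂(y) = y² ( ln(1 + 3z/y) − 3z/y ) is strictly decreasing in y on (0,∞). -/
/-- Key inequality: `log x < (x - 1/x)/2` for `x > 1` (i.e. `u < sinh u`). -/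
lemma log_lt_half_sub (x : ℝ) (hx : 1 < x) : Real.log x < (x - 1/x)/2 := by
  have h0 : 0 < x := by linarith
  have := Real.self_lt_sinh_iff.mpr (Real.log_pos hx)
  rwa [Real.sinh_eq, Real.exp_log h0, Real.exp_neg, Real.exp_log h0,
    ← one_div] at this

/-- **Fact.** For every fixed `z > 0`, `h₂(y) = y² (ln(1 + 3z/y) − 3z/y)` is strictly
decreasing on `(0,∞)`. -/
theorem h2_strictAnti (z : ℝ) (hz : 0 < z) :
    StrictAntiOn (fun y : ℝ => y ^ 2 * (Real.log (1 + 3 * z / y) - 3 * z / y))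
      (Set.Ioi 0) := by
  have key : ∀ y ∈ Set.Ioi (0:ℝ), HasDerivAt
      (fun y : ℝ => y ^ 2 * (Real.log (1 + 3 * z / y) - 3 * z / y))
      ((↑2 * y ^ 1) * (Real.log (1 + 3 * z / y) - 3 * z / y)
        + y ^ 2 * (((0 * y - 3 * z * 1)/y^2) / (1 + 3 * z / y)
            - (0 * y - 3 * z * 1)/y^2)) y := by
    intro y hy
    have hy0 : (0:ℝ) < y := hy
    have hdiv : HasDerivAt (fun y : ℝ => 3 * z / y) ((0 * y - 3 * z * 1)/y^2) y :=
      (hasDerivAt_const y (3*z)).div (hasDerivAt_id y) hy0.ne'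
    have hpos : 0 < 1 + 3 * z / y := by positivity
    have hlog : HasDerivAt (fun y : ℝ => Real.log (1 + 3 * z / y))
        (((0 * y - 3 * z * 1)/y^2) / (1 + 3 * z / y)) y := by
      simpa using (hdiv.const_add 1).log hpos.ne'
    exact (hasDerivAt_pow 2 y).mul (hlog.sub hdiv)
  have hderiv_neg : ∀ y ∈ interior (Set.Ioi (0:ℝ)),
      deriv (fun y : ℝ => y ^ 2 * (Real.log (1 + 3 * z / y) - 3 * z / y)) y < 0 := by
    intro y hy
    rw [interior_Ioi] at hy
    have hy0 : (0:ℝ) < y := hy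
    rw [(key y hy).deriv]
    have hx : 1 < 1 + 3 * z / y := by
      have : 0 < 3 * z / y := by positivity
      linarith
    have hk := log_lt_half_sub _ hx
    set A := Real.log (1 + 3 * z / y) with hA
    have h1 : 1 + 3 * z / y = (y + 3*z)/y := by field_simp
    rw [h1] at hk ⊢
    have hyz : 0 < y + 3*z := by linarith
    rw [one_div_div] at hk
    have hm : (0:ℝ) < 2*(y*(y+3*z)) := by positivity
    have hk' := mul_lt_mul_of_pos_right hk hm
    have heq : (((y+3*z)/y - y/(y+3*z))/2) * (2*(y*(y+3*z))) = (y+3*z)^2 - y^2 := by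
      field_simp
    rw [heq] at hk'
    have hE : 2 * y ^ 1 * (A - 3 * z / y) +
        y ^ 2 * ((0 * y - 3 * z * 1) / y ^ 2 / ((y + 3 * z) / y)
          - (0 * y - 3 * z * 1) / y ^ 2)
        = (A*(2*(y*(y+3*z))) - ((y+3*z)^2 - y^2)) / (y+3*z) := by
      field_simp
      ring
    rw [hE]
    apply div_neg_of_neg_of_pos _ hyz
    linarith
  exact strictAntiOn_of_deriv_neg (convex_Ioi 0)
    (fun y hy => ((key y hy).differentiableAt.continuousAt).continuousWithinAt)
    hderiv_neg
end
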